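/- Let f be locally integrable on ℝⁿ and define its Hardy–Littlewood maximal function Mf(x) = sup_{r>0} (1/m(B_x(r))) ∫_{B_x(r)} |f(y)| dy, where m is Lebesgue measure. Then for every p with 1 < p ≤ ∞ there exists a constant C_p depending only on p and n such that ‖Mf‖_{L^p(ℝⁿ)} ≤ C_p ‖f‖_{L^p(ℝⁿ)}. -/

import Mathlib

open MeasureTheory Metric ENNReal Set

/-- The Hardy–Littlewood maximal function of `f` on ℝⁿ. -/
noncomputable def maximalFn {n : ℕ} (f : EuclideanSpace ℝ (Fin n) → ℝ)
    (x : EuclideanSpace ℝ (Fin n)) : ℝ≥0∞ :=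
  ⨆ (r : ℝ) (_ : 0 < r),
    (volume (ball x r))⁻¹ * ∫⁻ y in ball x r, (‖f y‖₊ : ℝ≥0∞) ∂volume

/-- The `L^p` "norm" of an `ℝ≥0∞`-valued function. -/
noncomputable def eLp {α : Type*} [MeasurableSpace α] (g : α → ℝ≥0∞) (p : ℝ≥0∞)
    (μ : Measure α) : ℝ≥0∞ :=
  if p = 0 then 0 else if p = ∞ then essSup g μ
  else (∫⁻ x, g x ^ p.toReal ∂μ) ^ (1 / p.toReal)

namespace HLM
variable {n : ℕ}
local notation "E" => EuclideanSpace ℝ (Fin n)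

noncomputable def avg (G : E → ℝ≥0∞) (x : E) (r : ℝ) : ℝ≥0∞ :=
  (volume (ball x r))⁻¹ * ∫⁻ y in ball x r, G y

noncomputable def MF (G : E → ℝ≥0∞) (x : E) : ℝ≥0∞ := ⨆ (r : ℝ) (_ : 0 < r), avg G x r

lemma ballpos (x : E) {r : ℝ} (hr : 0 < r) : volume (ball x r) ≠ 0 :=
  (measure_ball_pos volume x hr).ne'

lemma ballfin (x : E) (r : ℝ) : volume (ball x r) ≠ ∞ := measure_ball_lt_top.ne

lemma MF_congr {G₁ G₂ : E → ℝ≥0∞} (h : G₁ =ᵐ[volume] G₂) : MF G₁ = MF G₂ := by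
  have : ∀ x r, avg G₁ x r = avg G₂ x r := by
    intro x r
    unfold avg
    congr 1
    exact lintegral_congr_ae (ae_restrict_of_ae h)
  unfold MF
  simp_rw [this]

lemma ball_eq_iUnion (x : E) {r : ℝ} (hr : 0 < r) :
    ball x r = ⋃ q : {q : ℚ // 0 < (q:ℝ) ∧ (q:ℝ) < r}, ball x (q:ℝ) := by
  ext y
  simp only [mem_iUnion, mem_ball]
  constructor
  · intro hy
    obtain ⟨q, hq1, hq2⟩ := exists_rat_btwn (max_lt hy hr : max (dist y x) 0 < r)
    exact ⟨⟨q, ⟨(le_max_right _ _).trans_lt hq1, hq2⟩⟩, (le_max_left _ _).trans_lt hq1⟩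
  · rintro ⟨⟨q, hq0, hqr⟩, hy⟩
    exact hy.trans hqr

lemma MF_eq_rat_sup {G : E → ℝ≥0∞} (hG : Measurable G) (x : E) :
    MF G x = ⨆ (q : ℚ) (_ : 0 < (q:ℝ)), avg G x (q:ℝ) := by
  apply le_antisymm
  · refine iSup₂_le fun r hr => ?_
    set ι := {q : ℚ // 0 < (q:ℝ) ∧ (q:ℝ) < r}
    have hne : Nonempty ι := by
      obtain ⟨q, hq1, hq2⟩ := exists_rat_btwn hr
      exact ⟨⟨q, by exact_mod_cast hq1, hq2⟩⟩
    have hmono : Monotone fun q : ι => ball x (q:ℝ) := fun a b hab =>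
      ball_subset_ball (by exact_mod_cast hab)
    have hdir : Directed (· ⊆ ·) fun q : ι => ball x (q:ℝ) := hmono.directed_le
    have key : (∫⁻ y in ball x r, G y) = ⨆ q : ι, ∫⁻ y in ball x ((q:ℚ):ℝ), G y := by
      have h1 : ∀ s : Set E, MeasurableSet s → (volume.withDensity G) s = ∫⁻ y in s, G y :=
        fun s hs => withDensity_apply G hs
      rw [← h1 _ measurableSet_ball, ball_eq_iUnion x hr, hdir.measure_iUnion]
      exact iSup_congr fun q => h1 _ measurableSet_ball
    calc avg G x r = ⨆ q : ι, (volume (ball x r))⁻¹ * ∫⁻ y in ball x ((q:ℚ):ℝ), G y := by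
          rw [avg, key, ENNReal.mul_iSup]
      _ ≤ ⨆ q : ι, avg G x ((q:ℚ):ℝ) := by
          refine iSup_mono fun q => mul_le_mul_left ?_ _
          exact ENNReal.inv_le_inv.2 (measure_mono (ball_subset_ball q.2.2.le))
      _ ≤ ⨆ (q : ℚ) (_ : 0 < (q:ℝ)), avg G x (q:ℝ) := by
          refine iSup_le fun q => le_iSup₂ (f := fun (q : ℚ) (_ : 0 < (q:ℝ)) => avg G x (q:ℝ))
            (q:ℚ) q.2.1
  · exact iSup₂_le fun q hq => le_iSup₂ (f := fun (r : ℝ) (_ : 0 < r) => avg G x r) (q:ℝ) hq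

lemma measurable_MF {G : E → ℝ≥0∞} (hG : Measurable G) : Measurable (MF G) := by
  have : MF G = fun x => ⨆ (q : ℚ) (_ : 0 < (q:ℝ)), avg G x (q:ℝ) :=
    funext fun x => MF_eq_rat_sup hG x
  rw [this]
  refine Measurable.iSup fun q => Measurable.iSup fun _ => ?_
  have h1 : ∀ x : E, avg G x (q:ℝ) =
      (volume (ball (0:E) (q:ℝ)))⁻¹ * ∫⁻ y, (ball x (q:ℝ)).indicator G y := by
    intro x
    rw [avg, Measure.addHaar_ball_center, lintegral_indicator measurableSet_ball]
  simp_rw [h1]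
  refine Measurable.const_mul ?_ _
  refine Measurable.lintegral_prod_right' (f := fun p : E × E => (ball p.1 (q:ℝ)).indicator G p.2) ?_
  have hset : MeasurableSet {p : E × E | dist p.2 p.1 < (q:ℝ)} :=
    measurableSet_lt (measurable_dist.comp (measurable_snd.prodMk measurable_fst)) measurable_const
  have : (fun p : E × E => (ball p.1 (q:ℝ)).indicator G p.2) =
      {p : E × E | dist p.2 p.1 < (q:ℝ)}.indicator (fun p => G p.2) := by
    ext p
    by_cases h : dist p.2 p.1 < (q:ℝ) <;>
      simp [indicator, mem_ball, h]
  rw [this]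
  exact (hG.comp measurable_snd).indicator hset


lemma lintegral_ball_lt_MF_mul {G : E → ℝ≥0∞} {x : E} {r : ℝ} (hr : 0 < r) {ℓ : ℝ≥0∞}
    (h : ℓ < avg G x r) : ℓ * volume (ball x r) < ∫⁻ y in ball x r, G y := by
  rw [← ENNReal.lt_div_iff_mul_lt (Or.inl (ballpos x hr)) (Or.inl (ballfin x r))]
  rwa [avg, ← ENNReal.div_eq_inv_mul] at h

lemma MF_lt_of_lintegral {G : E → ℝ≥0∞} {x : E} {r : ℝ} (hr : 0 < r) {ℓ : ℝ≥0∞}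
    (h : ℓ * volume (ball x r) < ∫⁻ y in ball x r, G y) : ℓ < MF G x := by
  refine lt_of_lt_of_le ?_ (le_iSup₂ (f := fun r (_ : 0 < r) => avg G x r) r hr)
  rw [avg, ← ENNReal.div_eq_inv_mul,
    ENNReal.lt_div_iff_mul_lt (Or.inl (ballpos x hr)) (Or.inl (ballfin x r))]
  exact h

/-- The weak (1,1) bound via the Vitali covering lemma. -/
lemma weak_type (G : E → ℝ≥0∞) {ℓ : ℝ≥0∞} (hl0 : ℓ ≠ 0) (hlt : ℓ ≠ ∞) :
    volume {x : E | ℓ < MF G x} ≤ ENNReal.ofReal ((5:ℝ)^n) * ℓ⁻¹ * ∫⁻ y, G y := by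
  set N5 : ℝ≥0∞ := ENNReal.ofReal ((5:ℝ)^n) with hN5
  set S : ℕ → Set E := fun m => {x | dist x 0 < m ∧ ∃ r : ℝ, 0 < r ∧ r ≤ (m:ℝ) ∧
    ℓ * volume (ball x r) < ∫⁻ y in ball x r, G y} with hS
  have hmono : Monotone S := by
    intro a b hab x hx
    obtain ⟨h1, r, hr1, hr2, hr3⟩ := hx
    exact ⟨h1.trans_le (by exact_mod_cast hab), r, hr1, hr2.trans (by exact_mod_cast hab), hr3⟩
  have hcover : {x : E | ℓ < MF G x} = ⋃ m, S m := by
    ext x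
    simp only [mem_iUnion, mem_setOf_eq]
    constructor
    · intro hx
      rw [MF, lt_iSup_iff] at hx
      obtain ⟨r, hr⟩ := hx
      rw [lt_iSup_iff] at hr
      obtain ⟨hr0, havg⟩ := hr
      obtain ⟨m, hm⟩ := exists_nat_gt (max (dist x 0) r)
      exact ⟨m, (le_max_left _ _).trans_lt hm,
        r, hr0, ((le_max_right _ _).trans_lt hm).le, lintegral_ball_lt_MF_mul hr0 havg⟩
    · rintro ⟨m, -, r, hr0, -, hlt'⟩
      exact MF_lt_of_lintegral hr0 hlt'
  rw [hcover, hmono.measure_iUnion]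
  refine iSup_le fun m => ?_
  -- choose radii
  have hrad : ∀ x ∈ S m, ∃ r : ℝ, 0 < r ∧ r ≤ (m:ℝ) ∧
      ℓ * volume (ball x r) < ∫⁻ y in ball x r, G y := fun x hx => hx.2
  classical
  set rad : E → ℝ := fun x => if h : x ∈ S m then (hrad x h).choose else 0 with hraddef
  have hrad0 : ∀ x ∈ S m, 0 < rad x := by
    intro x hx; rw [hraddef]; simp only [dif_pos hx]; exact (hrad x hx).choose_spec.1
  have hradm : ∀ x ∈ S m, rad x ≤ m := by
    intro x hx; rw [hraddef]; simp only [dif_pos hx]; exact (hrad x hx).choose_spec.2.1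
  have hradI : ∀ x ∈ S m, ℓ * volume (ball x (rad x)) < ∫⁻ y in ball x (rad x), G y := by
    intro x hx; rw [hraddef]; simp only [dif_pos hx]; exact (hrad x hx).choose_spec.2.2
  obtain ⟨u, huS, hdisj, hcov⟩ :=
    Vitali.exists_disjoint_subfamily_covering_enlargement_closedBall (S m) id rad m
      (fun a ha => hradm a ha) 4 (by norm_num)
  -- countability of u
  have hucnt : u.Countable := by
    have hU : (⋃ b : u, closedBall (b : E) (rad b)) ⊆ ball (0:E) (2*m+1) := by
      rintro z hz
      simp only [mem_iUnion] at hz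
      obtain ⟨b, hb⟩ := hz
      have hbS := huS b.2
      have : dist z (0:E) ≤ dist z (b:E) + dist (b:E) 0 := dist_triangle _ _ _
      have h1 : dist z (b:E) ≤ rad b := mem_closedBall.1 hb
      have h2 : dist (b:E) (0:E) < m := hbS.1
      have h3 : rad (b:E) ≤ m := hradm _ hbS
      simp only [mem_ball]
      calc dist z (0:E) ≤ rad (b:E) + dist (b:E) 0 := by linarith [dist_triangle z (b:E) 0]
        _ < 2*m+1 := by linarith
    have hfin : volume (⋃ b : u, closedBall (b : E) (rad b)) ≠ ∞ :=
      ((measure_mono hU).trans_lt measure_ball_lt_top).ne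
    have hdisj' : Pairwise (Function.onFun Disjoint fun b : u => closedBall (b : E) (rad b)) := by
      intro a b hab
      exact hdisj a.2 b.2 (fun h => hab (Subtype.coe_injective h))
    have := MeasureTheory.Measure.countable_meas_pos_of_disjoint_of_meas_iUnion_ne_top
      (volume : Measure E) (fun b : u => measurableSet_closedBall) hdisj' hfin
    have huniv : {b : u | 0 < volume (closedBall (b : E) (rad b))} = univ := by
      refine eq_univ_of_forall fun b => ?_
      exact lt_of_lt_of_le (measure_ball_pos volume _ (hrad0 _ (huS b.2))) (measure_mono ball_subset_closedBall)
    rw [huniv, countable_univ_iff] at this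
    exact countable_coe_iff.1 this
  -- covering by 5-times balls
  have hcov5 : S m ⊆ ⋃ b ∈ u, ball b (5 * rad b) := by
    intro a ha
    obtain ⟨b, hbu, hsub⟩ := hcov a ha
    have hb0 : 0 < rad b := hrad0 _ (huS hbu)
    refine mem_biUnion hbu ?_
    have ha' : a ∈ closedBall (id a) (rad a) := mem_closedBall_self (hrad0 a ha).le
    have := hsub ha'
    exact (closedBall_subset_ball (by linarith)) this
  -- sum up
  have key : ∀ b : E, b ∈ u → volume (ball b (5 * rad b)) ≤
      N5 * (ℓ⁻¹ * ∫⁻ y in ball b (rad b), G y) := by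
    intro b hb
    rw [Measure.addHaar_ball_mul_of_pos volume b (by norm_num : (0:ℝ) < 5) (rad b),
      finrank_euclideanSpace_fin, ← Measure.addHaar_ball_center volume b]
    refine mul_le_mul_right ?_ _
    have h := (hradI b (huS hb)).le
    calc volume (ball b (rad b)) = ℓ⁻¹ * (ℓ * volume (ball b (rad b))) := by
          rw [← mul_assoc, ENNReal.inv_mul_cancel hl0 hlt, one_mul]
      _ ≤ ℓ⁻¹ * ∫⁻ y in ball b (rad b), G y := mul_le_mul_right h _
  calc volume (S m) ≤ volume (⋃ b ∈ u, ball b (5 * rad b)) := measure_mono hcov5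
    _ ≤ ∑' b : u, volume (ball (b : E) (5 * rad b)) := measure_biUnion_le _ hucnt _
    _ ≤ ∑' b : u, N5 * (ℓ⁻¹ * ∫⁻ y in ball (b : E) (rad b), G y) :=
        ENNReal.tsum_le_tsum fun b => key b b.2
    _ = N5 * ℓ⁻¹ * ∑' b : u, ∫⁻ y in ball (b : E) (rad b), G y := by
        rw [ENNReal.tsum_mul_left, ENNReal.tsum_mul_left, mul_assoc]
    _ ≤ N5 * ℓ⁻¹ * ∫⁻ y, G y := by
        refine mul_le_mul_right ?_ _
        have hdisj'' : Pairwise (Function.onFun Disjoint fun b : u => ball (b : E) (rad b)) := by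
          intro a b hab
          have := hdisj a.2 b.2 (fun h => hab (Subtype.coe_injective h))
          exact this.mono ball_subset_closedBall ball_subset_closedBall
        haveI : Countable u := countable_coe_iff.2 hucnt
        rw [← lintegral_iUnion (fun b : u => measurableSet_ball) hdisj'' G]
        exact setLIntegral_le_lintegral _ _


lemma le_MF_trunc_add (G : E → ℝ≥0∞) (c : ℝ≥0∞) (x : E) :
    MF G x ≤ MF (fun y => if c < G y then G y else 0) x + c := by
  set G₁ : E → ℝ≥0∞ := fun y => if c < G y then G y else 0 with hG₁
  refine iSup₂_le fun r hr => ?_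
  have hpt : ∀ y, G y ≤ G₁ y + c := by
    intro y
    rw [hG₁]
    by_cases h : c < G y
    · simp only [if_pos h]; exact le_add_right le_rfl
    · simp only [if_neg h]; rw [zero_add]; exact not_lt.1 h
  have h1 : (∫⁻ y in ball x r, G y) ≤ (∫⁻ y in ball x r, G₁ y) + c * volume (ball x r) := by
    calc (∫⁻ y in ball x r, G y) ≤ ∫⁻ y in ball x r, (G₁ y + c) :=
          lintegral_mono fun y => hpt y
      _ = (∫⁻ y in ball x r, G₁ y) + c * volume (ball x r) := by
          rw [lintegral_add_right' _ aemeasurable_const, setLIntegral_const]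
  calc avg G x r ≤ (volume (ball x r))⁻¹ * ((∫⁻ y in ball x r, G₁ y) + c * volume (ball x r)) :=
        mul_le_mul_right h1 _
    _ = avg G₁ x r + (volume (ball x r))⁻¹ * (c * volume (ball x r)) := by
        rw [mul_add]; rfl
    _ = avg G₁ x r + c := by
        rw [mul_comm c, ← mul_assoc, ENNReal.inv_mul_cancel (ballpos x hr) (ballfin x r), one_mul]
    _ ≤ MF G₁ x + c := by
        exact add_le_add_left (le_iSup₂ (f := fun r (_ : 0 < r) => avg G₁ x r) r hr) c

lemma trunc_le_rpow {q : ℝ} (hq : 1 < q) {c : ℝ≥0∞} (hc0 : c ≠ 0) (hc : c ≠ ∞) (g : ℝ≥0∞) :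
    (if c < g then g else 0) ≤ c ^ (1-q) * g ^ q := by
  by_cases h : c < g
  · rw [if_pos h]
    rcases eq_or_ne g ∞ with rfl | hg
    · rw [ENNReal.top_rpow_of_pos (by linarith), ENNReal.mul_top
        (ENNReal.rpow_pos (pos_iff_ne_zero.2 hc0) hc).ne']
    · have hg0 : g ≠ 0 := fun h0 => by simp [h0] at h
      calc g = (c ^ (1-q) * c ^ (q-1)) * g := by
            rw [← ENNReal.rpow_add _ _ hc0 hc]
            norm_num
        _ = c ^ (1-q) * (c ^ (q-1) * g) := mul_assoc _ _ _
        _ ≤ c ^ (1-q) * (g ^ (q-1) * g) := by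
            exact mul_le_mul_right (mul_le_mul_left
              (ENNReal.rpow_le_rpow h.le (by linarith)) g) _
        _ = c ^ (1-q) * g ^ q := by
            congr 1
            rw [show q = (q-1)+1 by ring, ENNReal.rpow_add _ _ hg0 hg, ENNReal.rpow_one]
            ring_nf
  · rw [if_neg h]; exact zero_le


/-- Inner integral computation for the layer-cake argument. -/
lemma inner_int {q : ℝ} (hq : 1 < q) {c : ℝ≥0∞} (hc : c ≠ ∞) :
    ∫⁻ t in Ioi (0:ℝ), (ENNReal.ofReal (t/2))⁻¹ * ENNReal.ofReal (t ^ (q-1)) *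
      (if ENNReal.ofReal (t/2) < c then c else 0)
    = ENNReal.ofReal (2^q/(q-1)) * c ^ q := by
  rcases eq_or_ne c 0 with rfl | hc0
  · rw [ENNReal.zero_rpow_of_pos (by linarith), mul_zero]
    rw [← lintegral_zero (μ := volume.restrict (Ioi (0:ℝ)))]
    refine lintegral_congr fun t => ?_
    simp [not_lt_of_ge zero_le]
  set c' := c.toReal with hc'
  have hc'pos : 0 < c' := ENNReal.toReal_pos hc0 hc
  set T := 2 * c' with hT
  have hTpos : 0 < T := by positivity
  have key : ∀ᵐ t ∂(volume.restrict (Ioi (0:ℝ))),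
      (ENNReal.ofReal (t/2))⁻¹ * ENNReal.ofReal (t ^ (q-1)) *
        (if ENNReal.ofReal (t/2) < c then c else 0)
      = c * (Ioo (0:ℝ) T).indicator (fun t => ENNReal.ofReal (2 * t ^ (q-2))) t := by
    filter_upwards [self_mem_ae_restrict (measurableSet_Ioi : MeasurableSet (Ioi (0:ℝ)))]
      with t ht
    have ht0 : 0 < t := ht
    have hcond : (ENNReal.ofReal (t/2) < c) ↔ t < T := by
      rw [ENNReal.ofReal_lt_iff_lt_toReal (by positivity) hc, ← hc']
      constructor <;> intro h <;> [linarith; linarith]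
    by_cases h : t < T
    · rw [if_pos (hcond.2 h), indicator_of_mem (by exact ⟨ht0, h⟩ : t ∈ Ioo (0:ℝ) T)]
      rw [← ENNReal.ofReal_inv_of_pos (by positivity : 0 < t/2)]
      rw [← ENNReal.ofReal_mul (by positivity : (0:ℝ) ≤ (t/2)⁻¹)]
      have : (t/2)⁻¹ * t ^ (q-1) = 2 * t ^ (q-2) := by
        have h1 : t ^ (q-1) = t ^ (q-2) * t := by
          rw [← Real.rpow_add_one ht0.ne']; ring_nf
        rw [h1]; field_simp
      rw [this, mul_comm]
    · rw [if_neg (fun hh => h (hcond.1 hh)), mul_zero,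
        indicator_of_notMem (fun hm => h hm.2), mul_zero]
  rw [lintegral_congr_ae key, lintegral_const_mul' _ _ hc]
  have hIoo : Ioo (0:ℝ) T ∩ Ioi (0:ℝ) = Ioo (0:ℝ) T :=
    inter_eq_self_of_subset_left Ioo_subset_Ioi_self
  rw [lintegral_indicator measurableSet_Ioo, Measure.restrict_restrict measurableSet_Ioo, hIoo]
  -- compute the real integral
  have hint : IntegrableOn (fun t : ℝ => 2 * t ^ (q-2)) (Ioo (0:ℝ) T) volume := by
    have := (intervalIntegral.intervalIntegrable_rpow' (show (-1:ℝ) < q - 2 by linarith)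
      (a := 0) (b := T)).1
    exact (this.mono_set Ioo_subset_Ioc_self).const_mul 2
  have hnn : 0 ≤ᵐ[volume.restrict (Ioo (0:ℝ) T)] fun t : ℝ => 2 * t ^ (q-2) := by
    filter_upwards [self_mem_ae_restrict (measurableSet_Ioo : MeasurableSet (Ioo (0:ℝ) T))]
      with t ht
    have := ht.1
    positivity
  rw [← ofReal_integral_eq_lintegral_ofReal hint hnn]
  have hval : ∫ t in Ioo (0:ℝ) T, 2 * t ^ (q-2) = 2 * (T ^ (q-1) / (q-1)) := by
    rw [← integral_Ioc_eq_integral_Ioo, ← intervalIntegral.integral_of_le hTpos.le]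
    rw [intervalIntegral.integral_const_mul, integral_rpow (Or.inl (by linarith : (-1:ℝ) < q-2))]
    rw [Real.zero_rpow (by linarith : q - 2 + 1 ≠ 0)]
    ring_nf
  rw [hval]
  have h2 : 2 * (T ^ (q-1) / (q-1)) = (2^q/(q-1)) * c' ^ (q-1) := by
    rw [hT, Real.mul_rpow (by norm_num) hc'pos.le]
    have h3 : (2:ℝ) * 2 ^ (q-1) = 2 ^ q := by
      rw [← Real.rpow_one_add' (by norm_num) (by intro h; linarith [h] : 1 + (q-1) ≠ 0)]
      ring_nf
    rw [← h3]; ring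
  rw [h2, ENNReal.ofReal_mul (div_nonneg (by positivity) (by linarith)),
    ← ENNReal.ofReal_rpow_of_nonneg hc'pos.le
    (by linarith : (0:ℝ) ≤ q - 1)]
  rw [hc', ENNReal.ofReal_toReal hc]
  have hcc : c ^ q = c * c ^ (q-1) := by
    rw [show q = 1 + (q-1) by ring, ENNReal.rpow_add _ _ hc0 hc, ENNReal.rpow_one]
    ring_nf
  rw [hcc]; ring


lemma strong {G : E → ℝ≥0∞} (hG : Measurable G) {q : ℝ} (hq : 1 < q)
    (hI : (∫⁻ y, G y ^ q) ≠ ∞) :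
    (∫⁻ x, MF G x ^ q) ≤ ENNReal.ofReal q * (ENNReal.ofReal ((5:ℝ)^n) *
      (ENNReal.ofReal (2^q/(q-1)) * ∫⁻ y, G y ^ q)) := by
  have hq0 : (0:ℝ) < q := by linarith
  set I := ∫⁻ y, G y ^ q with hIdef
  set N5 : ℝ≥0∞ := ENNReal.ofReal ((5:ℝ)^n) with hN5
  set trunc : ℝ → E → ℝ≥0∞ := fun t y => if ENNReal.ofReal (t/2) < G y then G y else 0 with htr
  have htrunc_meas : ∀ t, Measurable (trunc t) := fun t =>
    Measurable.ite (measurableSet_lt measurable_const hG) hG measurable_const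
  -- weak-type estimate for the truncation
  have hW : ∀ t : ℝ, 0 < t → volume {x : E | ENNReal.ofReal t < MF G x} ≤
      N5 * (ENNReal.ofReal (t/2))⁻¹ * ∫⁻ y, trunc t y := by
    intro t ht
    have ht2 : (ENNReal.ofReal (t/2)) ≠ 0 := (ENNReal.ofReal_pos.2 (by linarith)).ne'
    have hsub : {x : E | ENNReal.ofReal t < MF G x} ⊆
        {x : E | ENNReal.ofReal (t/2) < MF (trunc t) x} := by
      intro x hx
      by_contra hcon
      simp only [mem_setOf_eq, not_lt] at hcon
      have h2 := (le_MF_trunc_add G (ENNReal.ofReal (t/2)) x).trans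
        (add_le_add_left hcon _)
      rw [← ENNReal.ofReal_add (by linarith) (by linarith)] at h2
      rw [show t/2 + t/2 = t by ring] at h2
      exact absurd hx (not_lt.2 h2)
    exact (measure_mono hsub).trans (weak_type (trunc t) ht2 ENNReal.ofReal_ne_top)
  have htail : ∀ t : ℝ, 0 < t → (∫⁻ y, trunc t y) ≤ (ENNReal.ofReal (t/2)) ^ (1-q) * I := by
    intro t ht
    have ht2 : (ENNReal.ofReal (t/2)) ≠ 0 := (ENNReal.ofReal_pos.2 (by linarith)).ne'
    calc (∫⁻ y, trunc t y) ≤ ∫⁻ y, (ENNReal.ofReal (t/2)) ^ (1-q) * G y ^ q :=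
          lintegral_mono fun y => trunc_le_rpow hq ht2 ENNReal.ofReal_ne_top (G y)
      _ = (ENNReal.ofReal (t/2)) ^ (1-q) * I :=
          lintegral_const_mul _ (hG.pow measurable_const)
  -- the maximal function is a.e. finite
  have hinfty : volume {x : E | MF G x = ∞} = 0 := by
    have hb : ∀ k : ℕ, volume {x : E | MF G x = ∞} ≤ (N5 * I) * ((k:ℝ≥0∞)+1)⁻¹ := by
      intro k
      set t : ℝ := 2*((k:ℝ)+1) with htdef
      have ht : 0 < t := by positivity
      have ht2 : t/2 = (k:ℝ)+1 := by rw [htdef]; ring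
      have hc1 : (1:ℝ≥0∞) ≤ ENNReal.ofReal (t/2) := by
        rw [ht2]
        exact ENNReal.one_le_ofReal.2 (by linarith [(Nat.cast_nonneg k : (0:ℝ) ≤ (k:ℝ))])
      have hsub : {x : E | MF G x = ∞} ⊆ {x : E | ENNReal.ofReal t < MF G x} := by
        intro x hx
        simp only [mem_setOf_eq] at hx ⊢
        rw [hx]
        exact ENNReal.ofReal_lt_top
      have hofk : ENNReal.ofReal ((k:ℝ)+1) = (k:ℝ≥0∞)+1 := by
        rw [ENNReal.ofReal_add (Nat.cast_nonneg k) zero_le_one, ENNReal.ofReal_natCast,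
          ENNReal.ofReal_one]
      calc volume {x : E | MF G x = ∞}
          ≤ volume {x : E | ENNReal.ofReal t < MF G x} := measure_mono hsub
        _ ≤ N5 * (ENNReal.ofReal (t/2))⁻¹ * ∫⁻ y, trunc t y := hW t ht
        _ ≤ N5 * (ENNReal.ofReal (t/2))⁻¹ * ((ENNReal.ofReal (t/2)) ^ (1-q) * I) :=
            mul_le_mul_right (htail t ht) _
        _ ≤ N5 * (ENNReal.ofReal (t/2))⁻¹ * (1 * I) := by
            refine mul_le_mul_right (mul_le_mul_left ?_ I) _
            calc (ENNReal.ofReal (t/2)) ^ (1-q) ≤ (ENNReal.ofReal (t/2)) ^ (0:ℝ) :=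
                  ENNReal.rpow_le_rpow_of_exponent_le hc1 (by linarith)
              _ = 1 := ENNReal.rpow_zero
        _ = (N5 * I) * ((k:ℝ≥0∞)+1)⁻¹ := by
            rw [one_mul, ht2, hofk]; ring
    have h1 : Filter.Tendsto (fun k : ℕ => ((k:ℝ≥0∞)+1)⁻¹) Filter.atTop (nhds 0) := by
      have h2 : Filter.Tendsto (fun k : ℕ => ((k:ℝ≥0∞))⁻¹) Filter.atTop (nhds 0) :=
        ENNReal.tendsto_inv_nat_nhds_zero
      refine tendsto_of_tendsto_of_tendsto_of_le_of_le tendsto_const_nhds h2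
        (fun k => zero_le) (fun k => ?_)
      exact ENNReal.inv_le_inv.2 (le_add_right le_rfl)
    have hlim : Filter.Tendsto (fun k : ℕ => (N5 * I) * ((k:ℝ≥0∞)+1)⁻¹) Filter.atTop (nhds 0) := by
      have := ENNReal.Tendsto.const_mul (a := N5 * I) h1
        (Or.inr (ENNReal.mul_ne_top ENNReal.ofReal_ne_top hI))
      simpa using this
    exact le_antisymm (ge_of_tendsto' hlim hb) zero_le
  have hMFmeas : Measurable (MF G) := measurable_MF hG
  have haefin : ∀ᵐ x : E ∂volume, MF G x ≠ ∞ := by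
    rw [ae_iff]
    simpa using hinfty
  have hGfin : ∀ᵐ y : E ∂volume, G y ≠ ∞ := by
    filter_upwards [ae_lt_top (hG.pow measurable_const) hI] with y hy
    intro hcon
    rw [hcon, ENNReal.top_rpow_of_pos hq0] at hy
    exact absurd hy (lt_irrefl _)
  -- layer cake
  have hcongr : (∫⁻ x, MF G x ^ q) = ∫⁻ x, ENNReal.ofReal ((MF G x).toReal ^ q) := by
    refine lintegral_congr_ae ?_
    filter_upwards [haefin] with x hx
    rw [ENNReal.toReal_rpow, ENNReal.ofReal_toReal (ENNReal.rpow_ne_top_of_nonneg hq0.le hx)]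
  have layer := lintegral_rpow_eq_lintegral_meas_lt_mul volume
    (f := fun x : E => (MF G x).toReal) (ae_of_all _ fun x => ENNReal.toReal_nonneg)
    hMFmeas.ennreal_toReal.aemeasurable hq0
  -- bound the distribution integrand
  have hdist : ∫⁻ t in Ioi (0:ℝ), volume {a : E | t < (MF G a).toReal} * ENNReal.ofReal (t^(q-1))
      ≤ ∫⁻ t in Ioi (0:ℝ), N5 * ∫⁻ y,
          (ENNReal.ofReal (t/2))⁻¹ * ENNReal.ofReal (t^(q-1)) * trunc t y := by
    refine lintegral_mono_ae ?_
    filter_upwards [self_mem_ae_restrict (measurableSet_Ioi : MeasurableSet (Ioi (0:ℝ)))]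
      with t ht
    have ht0 : 0 < t := ht
    have hsub : {a : E | t < (MF G a).toReal} ⊆ {a : E | ENNReal.ofReal t < MF G a} := by
      intro a ha
      simp only [mem_setOf_eq] at ha ⊢
      rcases eq_or_ne (MF G a) ∞ with h | h
      · rw [h]; exact ENNReal.ofReal_lt_top
      · exact (ENNReal.ofReal_lt_iff_lt_toReal ht0.le h).2 ha
    have step1 : volume {a : E | t < (MF G a).toReal} * ENNReal.ofReal (t^(q-1)) ≤
        (N5 * (ENNReal.ofReal (t/2))⁻¹ * ∫⁻ y, trunc t y) * ENNReal.ofReal (t^(q-1)) :=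
      mul_le_mul_left ((measure_mono hsub).trans (hW t ht0)) _
    refine step1.trans (le_of_eq ?_)
    have heq : (∫⁻ y, (ENNReal.ofReal (t/2))⁻¹ * ENNReal.ofReal (t^(q-1)) * trunc t y)
        = ((ENNReal.ofReal (t/2))⁻¹ * ENNReal.ofReal (t^(q-1))) * ∫⁻ y, trunc t y := by
      rw [← lintegral_const_mul _ (htrunc_meas t)]
    rw [heq]
    ring
  -- Fubini
  have hmeas_unc : Measurable (Function.uncurry fun (t:ℝ) (y:E) =>
      (ENNReal.ofReal (t/2))⁻¹ * ENNReal.ofReal (t^(q-1)) * trunc t y) := by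
    rw [Function.uncurry_def]
    refine Measurable.mul ?_ ?_
    · fun_prop
    · rw [htr]
      exact Measurable.ite
        (measurableSet_lt (by fun_prop) (hG.comp measurable_snd))
        (hG.comp measurable_snd) measurable_const
  have hswap := lintegral_lintegral_swap (μ := volume.restrict (Ioi (0:ℝ)))
    (ν := (volume : Measure E))
    (f := fun (t:ℝ) (y:E) => (ENNReal.ofReal (t/2))⁻¹ * ENNReal.ofReal (t^(q-1)) * trunc t y)
    hmeas_unc.aemeasurable
  have hinner : ∀ᵐ y : E ∂volume,
      (∫⁻ t in Ioi (0:ℝ), (ENNReal.ofReal (t/2))⁻¹ * ENNReal.ofReal (t^(q-1)) * trunc t y)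
        = ENNReal.ofReal (2^q/(q-1)) * G y ^ q := by
    filter_upwards [hGfin] with y hy
    exact inner_int hq hy
  calc (∫⁻ x, MF G x ^ q)
      = ENNReal.ofReal q * ∫⁻ t in Ioi (0:ℝ),
          volume {a : E | t < (MF G a).toReal} * ENNReal.ofReal (t^(q-1)) := by
        rw [hcongr, layer]
    _ ≤ ENNReal.ofReal q * ∫⁻ t in Ioi (0:ℝ), N5 * ∫⁻ y,
          (ENNReal.ofReal (t/2))⁻¹ * ENNReal.ofReal (t^(q-1)) * trunc t y :=
        mul_le_mul_right hdist _
    _ = ENNReal.ofReal q * (N5 * ∫⁻ t in Ioi (0:ℝ), ∫⁻ y,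
          (ENNReal.ofReal (t/2))⁻¹ * ENNReal.ofReal (t^(q-1)) * trunc t y) := by
        rw [lintegral_const_mul' _ _ (show N5 ≠ ∞ from ENNReal.ofReal_ne_top)]
    _ = ENNReal.ofReal q * (N5 * ∫⁻ y, ∫⁻ t in Ioi (0:ℝ),
          (ENNReal.ofReal (t/2))⁻¹ * ENNReal.ofReal (t^(q-1)) * trunc t y) := by
        rw [hswap]
    _ = ENNReal.ofReal q * (N5 * (ENNReal.ofReal (2^q/(q-1)) * I)) := by
        rw [lintegral_congr_ae hinner, lintegral_const_mul' _ _ ENNReal.ofReal_ne_top]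

lemma MF_le_essSup (G : E → ℝ≥0∞) (x : E) : MF G x ≤ essSup G volume := by
  refine iSup₂_le fun r hr => ?_
  have h1 : (∫⁻ y in ball x r, G y) ≤ essSup G volume * volume (ball x r) := by
    calc (∫⁻ y in ball x r, G y) ≤ ∫⁻ _ in ball x r, essSup G volume :=
          lintegral_mono_ae (ae_restrict_of_ae (_root_.ae_le_essSup (f := G)))
      _ = essSup G volume * volume (ball x r) := setLIntegral_const _ _
  calc avg G x r ≤ (volume (ball x r))⁻¹ * (essSup G volume * volume (ball x r)) :=
        mul_le_mul_right h1 _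
    _ = essSup G volume * ((volume (ball x r))⁻¹ * volume (ball x r)) := by ring
    _ = essSup G volume := by
        rw [ENNReal.inv_mul_cancel (ballpos x hr) (ballfin x r), mul_one]

lemma maximalFn_eq_MF (f : E → ℝ) :
    maximalFn f = MF fun y => (‖f y‖₊ : ℝ≥0∞) := rfl

end HLM

/-- Hardy–Littlewood maximal inequality: for every `1 < p ≤ ∞` there is a constant `C_p`
(depending only on `p` and `n`) with `‖Mf‖_{L^p} ≤ C_p ‖f‖_{L^p}` for all locally
integrable `f` on `ℝⁿ`. -/
theorem hardy_littlewood_maximal_inequality (n : ℕ) (p : ℝ≥0∞) (hp : 1 < p) :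
    ∃ C : ℝ≥0∞, C ≠ ∞ ∧ ∀ f : EuclideanSpace ℝ (Fin n) → ℝ,
      LocallyIntegrable f volume →
      eLp (maximalFn f) p volume ≤ C * eLp (fun x => (‖f x‖₊ : ℝ≥0∞)) p volume := by
  have hp0 : p ≠ 0 := (zero_lt_one.trans hp).ne'
  rcases eq_or_ne p ∞ with rfl | hptop
  · refine ⟨1, one_ne_top, fun f hf => ?_⟩
    have heLp_top : ∀ g : EuclideanSpace ℝ (Fin n) → ℝ≥0∞,
        eLp g ∞ volume = essSup g volume := fun g => by
      rw [eLp]; simp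
    rw [heLp_top, heLp_top, one_mul, HLM.maximalFn_eq_MF]
    exact essSup_le_of_ae_le _ (Filter.Eventually.of_forall fun x =>
      HLM.MF_le_essSup (fun y => (‖f y‖₊ : ℝ≥0∞)) x)
  · set q := p.toReal with hqdef
    have hq : 1 < q := by
      rw [hqdef, ← ENNReal.toReal_one]
      exact (ENNReal.toReal_lt_toReal one_ne_top hptop).2 hp
    have hq0 : (0:ℝ) < q := by linarith
    set κq : ℝ≥0∞ := ENNReal.ofReal q * (ENNReal.ofReal ((5:ℝ)^n) *
      ENNReal.ofReal (2^q/(q-1))) with hκq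
    set C : ℝ≥0∞ := max 1 (κq ^ (1/q)) with hC
    have hκtop : κq ≠ ∞ := by
      rw [hκq]
      exact ENNReal.mul_ne_top ENNReal.ofReal_ne_top
        (ENNReal.mul_ne_top ENNReal.ofReal_ne_top ENNReal.ofReal_ne_top)
    have hCtop : C ≠ ∞ :=
      (max_lt one_lt_top (ENNReal.rpow_lt_top_of_nonneg (by positivity) hκtop)).ne
    have hC0 : C ≠ 0 := by
      intro h
      have h1 : (1:ℝ≥0∞) ≤ 0 := h ▸ le_max_left 1 _
      simp at h1
    refine ⟨C, hCtop, fun f hf => ?_⟩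
    set F : EuclideanSpace ℝ (Fin n) → ℝ≥0∞ := fun x => (‖f x‖₊ : ℝ≥0∞) with hF
    have hFae : AEMeasurable F volume :=
      hf.aestronglyMeasurable.aemeasurable.nnnorm.coe_nnreal_ennreal
    set G : EuclideanSpace ℝ (Fin n) → ℝ≥0∞ := hFae.mk F with hGdef
    have hGmeas : Measurable G := hFae.measurable_mk
    have hFG : F =ᵐ[volume] G := hFae.ae_eq_mk
    have hMeq : maximalFn f = HLM.MF G := by
      rw [HLM.maximalFn_eq_MF]
      exact HLM.MF_congr hFG
    have hIeq : (∫⁻ y, F y ^ q ∂volume) = ∫⁻ y, G y ^ q ∂volume := by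
      refine lintegral_congr_ae ?_
      filter_upwards [hFG] with y hy
      rw [hy]
    rw [eLp, eLp, if_neg hp0, if_neg hptop, if_neg hp0, if_neg hptop, hMeq, ← hqdef, hIeq]
    set I := ∫⁻ y, G y ^ q ∂volume with hIdef
    rcases eq_or_ne I ∞ with hItop | hItop
    · rw [hItop, ENNReal.top_rpow_of_pos (by positivity), ENNReal.mul_top hC0]
      exact le_top
    · have hstrong := HLM.strong hGmeas hq hItop
      have h2 : (∫⁻ x, HLM.MF G x ^ q ∂volume) ≤ κq * I := by
        refine hstrong.trans (le_of_eq ?_)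
        rw [hκq, ← hIdef]
        ring
      calc (∫⁻ x, HLM.MF G x ^ q ∂volume) ^ (1/q) ≤ (κq * I) ^ (1/q) :=
            ENNReal.rpow_le_rpow h2 (by positivity)
        _ = κq ^ (1/q) * I ^ (1/q) := ENNReal.mul_rpow_of_nonneg _ _ (by positivity)
        _ ≤ C * I ^ (1/q) := mul_le_mul_left (le_max_right _ _) _
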